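/- Let G' be the expanded game of the lower- and upper-bounded energy construction: its states are (S × {0, 1, …, U}) ∪ {sink} for a game G = (S₁, S₂, E, w) and bound U ∈ ℕ, with an edge from (u, c) to (v, d) of weight d − c whenever (u, v) ∈ E and d = c + w(u, v) ∈ [0, U], an edge from (u, c) to sink of weight 1 whenever (u, v) ∈ E and c + w(u, v) ∉ [0, U], and a self-loop on sink of weight 1. Fix t ∈ ℚ, and let G'' have the same states and edges as G', where every edge leaving a state (s, c) gets weight c (including edges into sink), and the self-loop on sink gets weight ⌈t⌉ + 1. Then player 1 has a winning strategy from (s₀, 0) for AvgEnergyLevel(t) in G' if and only if player 1 has a winning strategy from (s₀, 0) for MeanPayOff(t) in G''. -/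

import Mathlib

open Filter

noncomputable section

/-- A two-player turn-based game on a (finite) state space `S`: `p1 s` holds iff state `s`
belongs to player 1 (otherwise it belongs to player 2), `E` is the edge relation (every state
has a successor), and `w` assigns an integer weight to every edge. -/
structure Game (S : Type) where
  p1 : S → Prop
  E : S → S → Prop
  w : S → S → ℤ
  succ : ∀ s, ∃ t, E s t

variable {S : Type}

/-- `π` is a play of `G` starting from `s₀`. -/
def IsPlay (G : Game S) (s₀ : S) (π : ℕ → S) : Prop :=
  π 0 = s₀ ∧ ∀ n, G.E (π n) (π (n + 1))

/-- Energy level of the play `π` at position `n`. -/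
def ELp (G : Game S) (π : ℕ → S) (n : ℕ) : ℤ :=
  ∑ i ∈ Finset.range n, G.w (π i) (π (i + 1))

/-- Average-energy of a play (limsup variant), in the extended reals. -/
def AEsupP (G : Game S) (π : ℕ → S) : EReal :=
  limsup (fun n : ℕ => (((∑ i ∈ Finset.range n, (ELp G π (i + 1) : ℝ)) / n : ℝ) : EReal)) atTop

/-- Average-energy of a play (liminf variant). -/
def AEinfP (G : Game S) (π : ℕ → S) : EReal :=
  liminf (fun n : ℕ => (((∑ i ∈ Finset.range n, (ELp G π (i + 1) : ℝ)) / n : ℝ) : EReal)) atTop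

/-- Mean-payoff of a play (limsup variant). -/
def MPsupP (G : Game S) (π : ℕ → S) : EReal :=
  limsup (fun n : ℕ => (((ELp G π n : ℝ) / n : ℝ) : EReal)) atTop

/-- Total-payoff of a play (limsup variant). -/
def TPsupP (G : Game S) (π : ℕ → S) : EReal :=
  limsup (fun n : ℕ => ((ELp G π n : ℝ) : EReal)) atTop

/-- The history (finite prefix) `π 0, …, π n` of a play, as a list. -/
def hist (π : ℕ → S) (n : ℕ) : List S := List.ofFn (fun i : Fin (n + 1) => π i)

/-- A (deterministic) strategy for player 1: on every nonempty finite path of `G` ending in a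
player-1 state, it prescribes an `E`-successor of the last state. -/
def IsStrat1 (G : Game S) (σ : List S → S) : Prop :=
  ∀ (ρ : List S) (h : ρ ≠ []), List.Chain' G.E ρ → G.p1 (ρ.getLast h) →
    G.E (ρ.getLast h) (σ ρ)

/-- A strategy for player 2 (who owns the states where `p1` fails). -/
def IsStrat2 (G : Game S) (σ : List S → S) : Prop :=
  ∀ (ρ : List S) (h : ρ ≠ []), List.Chain' G.E ρ → ¬ G.p1 (ρ.getLast h) →
    G.E (ρ.getLast h) (σ ρ)

/-- A strategy is memoryless if its choice only depends on the last state of the history. -/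
def Memoryless (σ : List S → S) : Prop :=
  ∀ (ρ ρ' : List S) (h : ρ ≠ []) (h' : ρ' ≠ []),
    ρ.getLast h = ρ'.getLast h' → σ ρ = σ ρ'

/-- The play `π` is consistent with the player-1 strategy `σ`. -/
def Consistent1 (G : Game S) (σ : List S → S) (π : ℕ → S) : Prop :=
  ∀ n, G.p1 (π n) → π (n + 1) = σ (hist π n)

/-- The play `π` is consistent with the player-2 strategy `σ`. -/
def Consistent2 (G : Game S) (σ : List S → S) (π : ℕ → S) : Prop :=
  ∀ n, ¬ G.p1 (π n) → π (n + 1) = σ (hist π n)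

/-- `σ` is a winning strategy for player 1 from `s₀` for the objective `Obj`:
every consistent play from `s₀` belongs to `Obj`. -/
def Winning1 (G : Game S) (s₀ : S) (σ : List S → S) (Obj : (ℕ → S) → Prop) : Prop :=
  IsStrat1 G σ ∧ ∀ π, IsPlay G s₀ π → Consistent1 G σ π → Obj π

/-- `σ` is a winning strategy for player 2 from `s₀` against the objective `Obj`:
every consistent play from `s₀` lies outside `Obj`. -/
def Winning2 (G : Game S) (s₀ : S) (σ : List S → S) (Obj : (ℕ → S) → Prop) : Prop :=
  IsStrat2 G σ ∧ ∀ π, IsPlay G s₀ π → Consistent2 G σ π → ¬ Obj π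

/-- Average-energy objective: the average-energy of the play is at most `t`. -/
def AvgEnergyLevel (G : Game S) (t : ℚ) : (ℕ → S) → Prop :=
  fun π => AEsupP G π ≤ ((t : ℝ) : EReal)

/-- Mean-payoff objective: the mean-payoff of the play is at most `t`. -/
def MeanPayOff (G : Game S) (t : ℚ) : (ℕ → S) → Prop :=
  fun π => MPsupP G π ≤ ((t : ℝ) : EReal)

/-- Total-payoff objective: the total-payoff of the play is at most `t`. -/
def TotalPayOff (G : Game S) (t : ℤ) : (ℕ → S) → Prop :=
  fun π => TPsupP G π ≤ ((t : ℝ) : EReal)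

/-- Lower-bounded energy objective with initial credit `c₀`. -/
def LowerObj (G : Game S) (c₀ : ℕ) : (ℕ → S) → Prop :=
  fun π => ∀ n, 0 ≤ (c₀ : ℤ) + ELp G π n

/-- Lower- and upper-bounded energy objective with upper bound `U` and initial credit `c₀`. -/
def LUObj (G : Game S) (U c₀ : ℕ) : (ℕ → S) → Prop :=
  fun π => ∀ n, 0 ≤ (c₀ : ℤ) + ELp G π n ∧ (c₀ : ℤ) + ELp G π n ≤ (U : ℤ)

/-- Edge relation of the expanded game: states are pairs (state, energy in `[0, U]`) plus a
`sink` state.  An edge of `G` is kept (updating the energy) when the new energy stays in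
`[0, U]`, and is redirected to `sink` otherwise; `sink` has a self-loop. -/
def expE (G : Game S) (U : ℕ) :
    ((S × Fin (U + 1)) ⊕ Unit) → ((S × Fin (U + 1)) ⊕ Unit) → Prop
  | Sum.inl (u, c), Sum.inl (v, d) => G.E u v ∧ (d : ℤ) = (c : ℤ) + G.w u v
  | Sum.inl (u, c), Sum.inr _ =>
      ∃ v, G.E u v ∧ ((c : ℤ) + G.w u v < 0 ∨ (U : ℤ) < (c : ℤ) + G.w u v)
  | Sum.inr _, Sum.inr _ => True
  | Sum.inr _, Sum.inl _ => False

/-- In the expanded game, a state `(s, c)` belongs to the player owning `s`,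
and `sink` belongs to player 1. -/
def expP1 (G : Game S) (U : ℕ) : ((S × Fin (U + 1)) ⊕ Unit) → Prop
  | Sum.inl (s, _) => G.p1 s
  | Sum.inr _ => True

theorem expSucc (G : Game S) (U : ℕ) : ∀ x, ∃ y, expE G U x y := by
  rintro (⟨u, c⟩ | _)
  · obtain ⟨v, hv⟩ := G.succ u
    by_cases h : 0 ≤ (c : ℤ) + G.w u v ∧ (c : ℤ) + G.w u v ≤ (U : ℤ)
    · refine ⟨Sum.inl (v, ⟨((c : ℤ) + G.w u v).toNat, ?_⟩), hv, ?_⟩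
      · omega
      · simp only [Int.toNat_of_nonneg h.1]
    · exact ⟨Sum.inr (), v, hv, by omega⟩
  · exact ⟨Sum.inr (), trivial⟩

/-- Weights of the expanded game of Lemma `aelu_to_ae`: kept edges keep their weight, and all
edges into `sink` (as well as its self-loop) have weight `1`. -/
def expW (G : Game S) (U : ℕ) :
    ((S × Fin (U + 1)) ⊕ Unit) → ((S × Fin (U + 1)) ⊕ Unit) → ℤ
  | Sum.inl (u, _), Sum.inl (v, _) => G.w u v
  | _, _ => 1

/-- The expanded game encoding the energy constraint `0 ≤ energy ≤ U` in the state space. -/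
def expGame (G : Game S) (U : ℕ) : Game ((S × Fin (U + 1)) ⊕ Unit) where
  p1 := expP1 G U
  E := expE G U
  w := expW G U
  succ := expSucc G U

/-- Weights of the expanded game `G'`: an edge from `(u, c)` to `(v, d)` has weight `d - c`
(which equals `w(u, v)` on actual edges), and all edges into `sink` as well as its self-loop
have weight `1`. -/
def expW' (U : ℕ) :
    ((S × Fin (U + 1)) ⊕ Unit) → ((S × Fin (U + 1)) ⊕ Unit) → ℤ
  | Sum.inl (_, c), Sum.inl (_, d) => (d : ℤ) - (c : ℤ)
  | _, _ => 1

/-- Weights of the mean-payoff game `G''`: every edge leaving a state `(s, c)` (including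
edges into `sink`) has weight `c`, and the self-loop on `sink` has weight `⌈t⌉ + 1`. -/
def expW'' (U : ℕ) (t : ℚ) :
    ((S × Fin (U + 1)) ⊕ Unit) → ((S × Fin (U + 1)) ⊕ Unit) → ℤ
  | Sum.inl (_, c), _ => (c : ℤ)
  | Sum.inr _, _ => ⌈t⌉ + 1

/-- The expanded game `G'` of the lower- and upper-bounded energy construction. -/
def expGame' (G : Game S) (U : ℕ) : Game ((S × Fin (U + 1)) ⊕ Unit) where
  p1 := expP1 G U
  E := expE G U
  w := expW' U
  succ := expSucc G U

/-- The mean-payoff game `G''`: same states and edges as `G'`, reweighted. -/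
def expGame'' (G : Game S) (U : ℕ) (t : ℚ) : Game ((S × Fin (U + 1)) ⊕ Unit) where
  p1 := expP1 G U
  E := expE G U
  w := expW'' U t
  succ := expSucc G U

/-! As long as a play of `G'` from `(s₀, 0)` avoids `sink`, its energy level is the energy
component `c` of its current state, and that component is exactly the weight `G''` puts on the
next edge. So the sum of the first `n` energy levels in `G'` is the `G''`-payoff of the first `n`
steps plus a term in `[0, U]`, and after division by `n` the average-energy and the mean-payoff
have the same limsup. A play that reaches `sink` loses both objectives: from then on its energy
level in `G'` grows linearly, so its average-energy is `+∞`, while its mean-payoff in `G''` is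
`⌈t⌉ + 1 > t`. Hence the same strategies win in both games. -/

open LinearGrowth

lemma linearGrowthSup_coe_le_of_le_add {u v : ℕ → ℝ} {B : ℝ} (h : ∀ n, u n ≤ v n + B) :
    linearGrowthSup (fun n ↦ (u n : EReal)) ≤ linearGrowthSup (fun n ↦ (v n : EReal)) :=
  linearGrowthSup_le_of_eventually_le (EReal.coe_ne_top B)
    (Eventually.of_forall fun n ↦ by exact_mod_cast h n)

lemma linearGrowthSup_coe_add_of_bounded {u v : ℕ → ℝ} {B : ℝ} (h₀ : ∀ n, 0 ≤ v n)
    (hB : ∀ n, v n ≤ B) :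
    linearGrowthSup (fun n ↦ ((u n + v n : ℝ) : EReal)) =
      linearGrowthSup (fun n ↦ (u n : EReal)) :=
  le_antisymm (linearGrowthSup_coe_le_of_le_add fun n ↦ by linarith [hB n])
    (linearGrowthSup_coe_le_of_le_add (B := 0) fun n ↦ by linarith [h₀ n])

lemma linearGrowthSup_coe_of_eventually_eq_mul_add {u : ℕ → ℝ} {K B : ℝ}
    (h : ∀ᶠ n in atTop, u n = K * n + B) : linearGrowthSup (fun n ↦ (u n : EReal)) = K := by
  have hK : linearGrowthSup (fun n : ℕ ↦ ((K * n : ℝ) : EReal)) = K :=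
    linearGrowthSup_const_mul_self (a := (K : EReal))
  rw [← hK]
  refine le_antisymm (linearGrowthSup_le_of_eventually_le (EReal.coe_ne_top B) ?_)
    (linearGrowthSup_le_of_eventually_le (EReal.coe_ne_top (-B)) ?_) <;>
  filter_upwards [h] with n hn <;> norm_cast <;> linarith

lemma linearGrowthSup_coe_sum_eq_top {a : ℕ → ℝ} {C : ℝ}
    (h : ∀ k : ℕ, (k : ℝ) - C ≤ a k) :
    linearGrowthSup (fun n ↦ ((∑ i ∈ Finset.range n, a (i + 1) : ℝ) : EReal)) = ⊤ := by
  refine (EReal.eq_top_iff_forall_lt _).2 fun y ↦ ?_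
  have hsum (n : ℕ) : (n : ℝ) * ((n + 1) / 2 - C) ≤ ∑ i ∈ Finset.range n, a (i + 1) := by
    calc (n : ℝ) * ((n + 1) / 2 - C) = ∑ i ∈ Finset.range n, (((i + 1 : ℕ) : ℝ) - C) := by
          induction n with
          | zero => simp
          | succ n ih => rw [Finset.sum_range_succ, ← ih]; push_cast; ring
      _ ≤ _ := Finset.sum_le_sum fun i _ ↦ h (i + 1)
  refine (EReal.coe_lt_coe_iff.2 (lt_add_one y)).trans_le (Frequently.le_linearGrowthSup ?_)
  refine (eventually_ge_atTop ⌈2 * (y + 1 + C)⌉₊).frequently.mono fun n hn ↦ ?_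
  have hn' : 2 * (y + 1 + C) ≤ n := Nat.ceil_le.1 hn
  have : ((y + 1) * n : ℝ) ≤ ∑ i ∈ Finset.range n, a (i + 1) :=
    (hsum n).trans' (by nlinarith [(n.cast_nonneg : (0 : ℝ) ≤ n)])
  exact_mod_cast this

lemma MPsupP_eq_linearGrowthSup (G : Game S) (π : ℕ → S) :
    MPsupP G π = linearGrowthSup (fun n ↦ ((ELp G π n : ℝ) : EReal)) :=
  rfl

lemma AEsupP_eq_linearGrowthSup (G : Game S) (π : ℕ → S) :
    AEsupP G π =
      linearGrowthSup (fun n ↦ ((∑ i ∈ Finset.range n, (ELp G π (i + 1) : ℝ) : ℝ) : EReal)) :=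
  rfl

lemma ELp_succ (G : Game S) (π : ℕ → S) (n : ℕ) :
    ELp G π (n + 1) = ELp G π n + G.w (π n) (π (n + 1)) :=
  Finset.sum_range_succ _ _

lemma ELp_add_of_forall_eq (G : Game S) {π : ℕ → S} {m : ℕ} {x : S}
    (h : ∀ j, π (m + j) = x) (j : ℕ) : ELp G π (m + j) = ELp G π m + j * G.w x x := by
  induction j with
  | zero => simp
  | succ j ih =>
    have hj1 : π (m + j + 1) = x := h (j + 1)
    rw [← add_assoc, ELp_succ, ih, h j, hj1]
    push_cast
    ring

section Expanded

variable {G : Game S} {U : ℕ} {t : ℚ} {π : ℕ → (S × Fin (U + 1)) ⊕ Unit}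

def expEnergy : (S × Fin (U + 1)) ⊕ Unit → ℤ
  | Sum.inl (_, c) => c
  | Sum.inr _ => 0

lemma expEnergy_nonneg (x : (S × Fin (U + 1)) ⊕ Unit) : 0 ≤ expEnergy x := by
  rcases x with ⟨_, c⟩ | _ <;> simp [expEnergy]

lemma expEnergy_le (x : (S × Fin (U + 1)) ⊕ Unit) : expEnergy x ≤ U := by
  rcases x with ⟨_, c⟩ | _
  · simp only [expEnergy]; omega
  · simp [expEnergy]

lemma expEnergy_sub_le_expW' {x y : (S × Fin (U + 1)) ⊕ Unit} (h : expE G U x y) :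
    expEnergy y - expEnergy x ≤ expW' U x y := by
  rcases x with ⟨_, c⟩ | _ <;> rcases y with ⟨_, d⟩ | _ <;>
    simp_all [expEnergy, expE, expW']

lemma add_eq_sink_of_eq_sink (hπ : ∀ n, expE G U (π n) (π (n + 1))) {m : ℕ}
    (hm : π m = Sum.inr ()) (j : ℕ) : π (m + j) = Sum.inr () := by
  induction j with
  | zero => exact hm
  | succ j ih =>
    have h := hπ (m + j)
    rw [ih] at h
    rcases hx : π (m + j + 1) with _ | ⟨⟩
    · simp [hx, expE] at h
    · rfl

lemma expEnergy_sub_le_ELp_expGame' (hπ : ∀ n, expE G U (π n) (π (n + 1))) (n : ℕ) :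
    expEnergy (π n) - expEnergy (π 0) ≤ ELp (expGame' G U) π n := by
  rw [← Finset.sum_range_sub (fun i ↦ expEnergy (π i))]
  exact Finset.sum_le_sum fun i _ ↦ expEnergy_sub_le_expW' (hπ i)

lemma ELp_expGame'_of_forall_ne_sink (h : ∀ n, π n ≠ Sum.inr ()) (n : ℕ) :
    ELp (expGame' G U) π n = expEnergy (π n) - expEnergy (π 0) := by
  rw [← Finset.sum_range_sub (fun i ↦ expEnergy (π i))]
  refine Finset.sum_congr rfl fun i _ ↦ ?_
  rcases hx : π i with ⟨_, c⟩ | ⟨⟩ <;> rcases hy : π (i + 1) with ⟨_, d⟩ | ⟨⟩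
  · simp [expGame', expW', expEnergy]
  all_goals simp_all

lemma ELp_expGame''_of_forall_ne_sink (h : ∀ n, π n ≠ Sum.inr ()) (n : ℕ) :
    ELp (expGame'' G U t) π n = ∑ i ∈ Finset.range n, expEnergy (π i) := by
  refine Finset.sum_congr rfl fun i _ ↦ ?_
  rcases hx : π i with ⟨_, c⟩ | ⟨⟩
  · simp [expGame'', expW'', expEnergy]
  · exact absurd hx (h i)

lemma AEsupP_expGame'_eq_top_of_eq_sink (hπ : ∀ n, expE G U (π n) (π (n + 1)))
    (h₀ : expEnergy (π 0) = 0) {m : ℕ} (hm : π m = Sum.inr ()) :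
    AEsupP (expGame' G U) π = ⊤ := by
  have hstay := ELp_add_of_forall_eq (expGame' G U) (add_eq_sink_of_eq_sink hπ hm)
  have hpos (k : ℕ) : 0 ≤ ELp (expGame' G U) π k := by
    linarith [expEnergy_sub_le_ELp_expGame' hπ k, expEnergy_nonneg (π k)]
  have hge (k : ℕ) : (k : ℤ) - m ≤ ELp (expGame' G U) π k := by
    rcases le_or_gt k m with hk | hk
    · linarith [hpos k, Int.ofNat_le.2 hk]
    · obtain ⟨j, rfl⟩ := Nat.exists_eq_add_of_le hk.le
      rw [hstay, show (expGame' G U).w (Sum.inr ()) (Sum.inr ()) = 1 from rfl]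
      push_cast
      linarith [hpos m]
  rw [AEsupP_eq_linearGrowthSup]
  exact linearGrowthSup_coe_sum_eq_top (a := fun k ↦ (ELp (expGame' G U) π k : ℝ)) (C := m)
    fun k ↦ by exact_mod_cast hge k

lemma MPsupP_expGame''_of_eq_sink (hπ : ∀ n, expE G U (π n) (π (n + 1))) {m : ℕ}
    (hm : π m = Sum.inr ()) : MPsupP (expGame'' G U t) π = ((⌈t⌉ + 1 : ℤ) : ℝ) := by
  have hstay := ELp_add_of_forall_eq (expGame'' G U t) (add_eq_sink_of_eq_sink hπ hm)
  refine linearGrowthSup_coe_of_eventually_eq_mul_add (B := ELp (expGame'' G U t) π m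
    - m * ((⌈t⌉ + 1 : ℤ) : ℝ)) ((eventually_ge_atTop m).mono fun n hn ↦ ?_)
  obtain ⟨j, rfl⟩ := Nat.exists_eq_add_of_le hn
  rw [hstay]
  simp only [expGame'', expW'']
  push_cast
  ring

lemma AEsupP_expGame'_eq_MPsupP_expGame'' (h : ∀ n, π n ≠ Sum.inr ())
    (h₀ : expEnergy (π 0) = 0) : AEsupP (expGame' G U) π = MPsupP (expGame'' G U t) π := by
  have hsum (n : ℕ) : ∑ i ∈ Finset.range n, ELp (expGame' G U) π (i + 1)
      = ELp (expGame'' G U t) π n + expEnergy (π n) := by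
    simp only [ELp_expGame'_of_forall_ne_sink h, ELp_expGame''_of_forall_ne_sink h, h₀, sub_zero]
    rw [← Finset.sum_range_succ, Finset.sum_range_succ', h₀, add_zero]
  rw [AEsupP_eq_linearGrowthSup, MPsupP_eq_linearGrowthSup]
  refine Eq.trans ?_ (linearGrowthSup_coe_add_of_bounded (v := fun n ↦ (expEnergy (π n) : ℝ))
    (B := U) (fun n ↦ by exact_mod_cast expEnergy_nonneg (π n))
    (fun n ↦ by exact_mod_cast expEnergy_le (π n)))
  congr with n
  exact_mod_cast hsum n

lemma avgEnergyLevel_expGame'_iff_meanPayOff_expGame'' (hπ : ∀ n, expE G U (π n) (π (n + 1)))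
    (h₀ : expEnergy (π 0) = 0) :
    AvgEnergyLevel (expGame' G U) t π ↔ MeanPayOff (expGame'' G U t) t π := by
  by_cases hsink : ∃ m, π m = Sum.inr ()
  · obtain ⟨m, hm⟩ := hsink
    refine iff_of_false (by simp [AvgEnergyLevel, AEsupP_expGame'_eq_top_of_eq_sink hπ h₀ hm]) ?_
    rw [MeanPayOff, MPsupP_expGame''_of_eq_sink hπ hm, EReal.coe_le_coe_iff, not_le]
    exact_mod_cast (Int.le_ceil t).trans_lt (lt_add_one _)
  · push Not at hsink
    rw [AvgEnergyLevel, MeanPayOff, AEsupP_expGame'_eq_MPsupP_expGame'' hsink h₀]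

end Expanded

theorem expAE_reduces_to_MP_general {S : Type} (G : Game S) (s₀ : S) (U : ℕ) (t : ℚ) :
    (∃ σ, Winning1 (expGame' G U) (Sum.inl (s₀, (⟨0, Nat.succ_pos U⟩ : Fin (U + 1)))) σ
        (AvgEnergyLevel (expGame' G U) t)) ↔
    (∃ σ, Winning1 (expGame'' G U t) (Sum.inl (s₀, (⟨0, Nat.succ_pos U⟩ : Fin (U + 1)))) σ
        (MeanPayOff (expGame'' G U t) t)) :=
  exists_congr fun _ ↦ and_congr_right fun _ ↦ forall_congr' fun _ ↦ forall_congr' fun hπ ↦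
    imp_congr_right fun _ ↦
      avgEnergyLevel_expGame'_iff_meanPayOff_expGame'' hπ.2 (by rw [hπ.1]; rfl)

/-- Reduction of the average-energy objective on the expanded game `G'` to a mean-payoff
objective on the reweighted game `G''`: player 1 wins `AvgEnergyLevel t` from `(s₀, 0)`
in `G'` iff he wins `MeanPayOff t` from `(s₀, 0)` in `G''`. -/
theorem expAE_reduces_to_MP {S : Type} [Fintype S] (G : Game S) (s₀ : S) (U : ℕ) (t : ℚ) :
    (∃ σ, Winning1 (expGame' G U) (Sum.inl (s₀, (⟨0, Nat.succ_pos U⟩ : Fin (U + 1)))) σ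
        (AvgEnergyLevel (expGame' G U) t)) ↔
    (∃ σ, Winning1 (expGame'' G U t) (Sum.inl (s₀, (⟨0, Nat.succ_pos U⟩ : Fin (U + 1)))) σ
        (MeanPayOff (expGame'' G U t) t)) :=
  expAE_reduces_to_MP_general G s₀ U t
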